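/- arXiv:2010.02126 — 7 statements merged into one kernel-verified Lean document; each statement's English description precedes it below -/
import Mathlib

section
/- For all u in the open interval (3/4, 3/2), the function φ(u) = u − log u − 1 satisfies |φ(u) − (1/2)(1/u − 1)²| ≤ (6/5)|1/u − 1|³. -/
/-!
Put `x = 1 - 1/u`, so that `|x| < 1/3`, `u = 1/(1 - x)` and `log u = -log (1 - x)`. Then
`φ(u) - (1/2)(1/u - 1)² = x/(1 - x) + log (1 - x) - x²/2`. Expanding `x/(1 - x)` exactly and
`log (1 - x)` to fifth order, this equals `x³ (1/(1 - x) - 1/3 - x/4 - x²/5)` up to a remainder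
of size `(3/2)|x|⁶ ≤ |x|³/18`, and the bracket is at most `16/15` in absolute value.
-/

open Real

lemma abs_log_one_sub_add_taylor_five_le {x : ℝ} (hx : |x| ≤ 1 / 3) :
    |log (1 - x) + (x + x ^ 2 / 2 + x ^ 3 / 3 + x ^ 4 / 4 + x ^ 5 / 5)| ≤ |x| ^ 3 / 18 := by
  have hx0 : 0 ≤ |x| := abs_nonneg x
  have hrem := abs_log_sub_add_sum_range_le (by linarith : |x| < 1) 5
  simp only [Finset.sum_range_succ, Finset.sum_range_zero] at hrem
  norm_num at hrem
  calc |log (1 - x) + (x + x ^ 2 / 2 + x ^ 3 / 3 + x ^ 4 / 4 + x ^ 5 / 5)|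
      = |x + x ^ 2 / 2 + x ^ 3 / 3 + x ^ 4 / 4 + x ^ 5 / 5 + log (1 - x)| := by rw [add_comm]
    _ ≤ |x| ^ 6 / (1 - |x|) := hrem
    _ ≤ |x| ^ 3 / 18 := by
      rw [div_le_iff₀ (by linarith)]
      have hcube : |x| ^ 3 ≤ 1 / 27 := by
        calc |x| ^ 3 ≤ (1 / 3) ^ 3 := by gcongr
          _ = 1 / 27 := by norm_num
      nlinarith [pow_nonneg hx0 3]

lemma abs_inv_one_sub_sub_quadratic_le {x : ℝ} (hx : |x| ≤ 1 / 3) :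
    |1 / (1 - x) - 1 / 3 - x / 4 - x ^ 2 / 5| ≤ 16 / 15 := by
  obtain ⟨hlo, hhi⟩ := abs_le.mp hx
  have hpos : 0 < 1 - x := by linarith
  rw [abs_le]
  constructor
  · have : 3 / 4 ≤ 1 / (1 - x) := by rw [le_div_iff₀ hpos]; linarith
    nlinarith
  · rw [sub_sub, sub_sub, sub_le_iff_le_add, div_le_iff₀ hpos]
    nlinarith [mul_nonneg (by linarith : 0 ≤ 1 / 3 - x) (by linarith : 0 ≤ x + 1 / 3)]

lemma abs_div_one_sub_add_log_one_sub_sub_sq_le {x : ℝ} (hx : |x| ≤ 1 / 3) :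
    |x / (1 - x) + log (1 - x) - x ^ 2 / 2| ≤ 6 / 5 * |x| ^ 3 := by
  have hne : 1 - x ≠ 0 := by linarith [le_abs_self x]
  have hsplit : x / (1 - x) + log (1 - x) - x ^ 2 / 2
      = x ^ 3 * (1 / (1 - x) - 1 / 3 - x / 4 - x ^ 2 / 5)
        + (log (1 - x) + (x + x ^ 2 / 2 + x ^ 3 / 3 + x ^ 4 / 4 + x ^ 5 / 5)) := by
    field_simp
    ring
  calc |x / (1 - x) + log (1 - x) - x ^ 2 / 2|
    _ ≤ |x| ^ 3 * |1 / (1 - x) - 1 / 3 - x / 4 - x ^ 2 / 5|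
        + |log (1 - x) + (x + x ^ 2 / 2 + x ^ 3 / 3 + x ^ 4 / 4 + x ^ 5 / 5)| := by
      rw [hsplit, ← abs_pow, ← abs_mul]
      exact abs_add_le _ _
    _ ≤ |x| ^ 3 * (16 / 15) + |x| ^ 3 / 18 := by
      gcongr
      · exact abs_inv_one_sub_sub_quadratic_le hx
      · exact abs_log_one_sub_add_taylor_five_le hx
    _ ≤ 6 / 5 * |x| ^ 3 := by nlinarith [pow_nonneg (abs_nonneg x) 3]

/-- For all `u ∈ (3/4, 3/2)`, the function `φ(u) = u − log u − 1` satisfies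
`|φ(u) − (1/2)(1/u − 1)²| ≤ (6/5)|1/u − 1|³`. -/
theorem stmt2 (u : ℝ) (hu : u ∈ Set.Ioo (3 / 4 : ℝ) (3 / 2)) :
    |(u - Real.log u - 1) - (1 / 2) * (1 / u - 1) ^ 2| ≤ (6 / 5) * |1 / u - 1| ^ 3 := by
  obtain ⟨hlo, hhi⟩ := hu
  have hpos : 0 < u := by linarith
  set x := 1 - 1 / u with hx
  have hxabs : |x| ≤ 1 / 3 := by
    rw [abs_le]
    constructor
    · rw [hx, le_sub_comm, div_le_iff₀ hpos]; linarith
    · rw [hx, sub_le_comm, le_div_iff₀ hpos]; linarith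
  have hinv : 1 - x = u⁻¹ := by rw [hx]; ring
  have hphi : (u - log u - 1) - (1 / 2) * (1 / u - 1) ^ 2
      = x / (1 - x) + log (1 - x) - x ^ 2 / 2 := by
    rw [hinv, log_inv, hx]
    field_simp
    ring
  rw [hphi, show 1 / u - 1 = -x by ring, abs_neg]
  exact abs_div_one_sub_add_log_one_sub_sub_sq_le hxabs
end

section
/- Let w₁,…,wₙ be nonnegative reals with sum at least n − c₁ n^{b₁}, each wᵢ ≤ 1, and each wᵢ ≥ c₂ n^{−b₂}, where 0 < b₂ < b₁ < 1, c₁ > 0, c₂ > 0. Then for all n > max{c₂^{−1/b₂}, (2c₂)^{1/b₂}}, the product ∏ᵢ wᵢ ≥ exp(−4 b₂ c₁ n^{b₁} log n). -/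
/-!
Put `δ = c₂ n^{-b₂}`. By concavity of `log`, every `w ∈ [δ, 1]` satisfies
`log w ≥ (1 - w)/(1 - δ) · log δ`, and the size condition on `n` gives `δ ≤ 1/2` and
`log δ ≥ -2 b₂ log n`, so `log w ≥ -4 b₂ log n · (1 - w)`. Summing over `i`, the total deficit
`∑ (1 - wᵢ)` is at most `c₁ n^{b₁}`.
-/

open Real Finset

namespace Real

theorem one_sub_div_one_sub_mul_log_le_log {δ x : ℝ} (hδ : 0 < δ) (hδ1 : δ < 1)
    (hδx : δ ≤ x) (hx1 : x ≤ 1) : (1 - x) / (1 - δ) * log δ ≤ log x := by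
  have h1δ : 0 < 1 - δ := sub_pos.2 hδ1
  set t := (1 - x) / (1 - δ)
  have ht0 : 0 ≤ t := div_nonneg (sub_nonneg.2 hx1) h1δ.le
  have ht1 : 0 ≤ 1 - t := by
    rw [sub_nonneg, div_le_one h1δ]
    linarith
  have hx : t * δ + (1 - t) * 1 = x := by
    simp only [t]
    field_simp
    ring
  have hconc := strictConcaveOn_log_Ioi.concaveOn.2 (Set.mem_Ioi.2 hδ) (Set.mem_Ioi.2 one_pos)
    ht0 ht1 (add_sub_cancel t 1)
  simpa only [smul_eq_mul, log_one, mul_zero, add_zero, hx] using hconc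

theorem two_mul_one_sub_mul_log_le_log {δ x : ℝ} (hδ : 0 < δ) (hδ2 : δ ≤ 1 / 2)
    (hδx : δ ≤ x) (hx1 : x ≤ 1) : 2 * (1 - x) * log δ ≤ log x := by
  have hcoeff : (1 - x) / (1 - δ) ≤ 2 * (1 - x) := by
    rw [div_le_iff₀ (by linarith)]
    nlinarith
  calc 2 * (1 - x) * log δ ≤ (1 - x) / (1 - δ) * log δ :=
        mul_le_mul_of_nonpos_right hcoeff (log_nonpos hδ.le (by linarith))
    _ ≤ log x := one_sub_div_one_sub_mul_log_le_log hδ (by linarith) hδx hx1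

theorem exp_two_mul_log_mul_sum_one_sub_le_prod {ι : Type*} [Fintype ι] {w : ι → ℝ} {δ : ℝ}
    (hδ : 0 < δ) (hδ2 : δ ≤ 1 / 2) (hδw : ∀ i, δ ≤ w i) (hw1 : ∀ i, w i ≤ 1) :
    exp (2 * log δ * ∑ i, (1 - w i)) ≤ ∏ i, w i := by
  have hprod : ∏ i, w i = exp (∑ i, log (w i)) := by
    rw [exp_sum]
    exact prod_congr rfl fun i _ => (exp_log (hδ.trans_le (hδw i))).symm
  rw [hprod, exp_le_exp, mul_sum]
  refine sum_le_sum fun i _ => ?_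
  linarith [two_mul_one_sub_mul_log_le_log hδ hδ2 (hδw i) (hw1 i)]

theorem mul_rpow_neg_le_half {c b x : ℝ} (hc : 0 ≤ c) (hb : 0 < b)
    (hx : (2 * c) ^ (1 / b) < x) : c * x ^ (-b) ≤ 1 / 2 := by
  have hx0 : 0 < x := (rpow_nonneg (by positivity) _).trans_lt hx
  rw [one_div, rpow_inv_lt_iff_of_pos (by positivity) hx0.le hb] at hx
  rw [rpow_neg hx0.le, ← div_eq_mul_inv, div_le_iff₀ (rpow_pos_of_pos hx0 b)]
  linarith

theorem neg_two_mul_log_le_log_mul_rpow_neg {c b x : ℝ} (hc : 0 < c) (hb : 0 < b)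
    (hx : c ^ (-(1 / b)) < x) : -(2 * b * log x) ≤ log (c * x ^ (-b)) := by
  have hx0 : 0 < x := (rpow_pos_of_pos hc _).trans hx
  rw [rpow_neg hc.le, ← inv_rpow hc.le, one_div,
    rpow_inv_lt_iff_of_pos (inv_pos.2 hc).le hx0.le hb] at hx
  have hlog := log_lt_log (inv_pos.2 hc) hx
  rw [log_inv, log_rpow hx0] at hlog
  rw [log_mul hc.ne' (rpow_pos_of_pos hx0 _).ne', log_rpow hx0]
  linarith

end Real

theorem stmt4_general (n : ℕ) (w : Fin n → ℝ) (c₁ c₂ b₁ b₂ : ℝ)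
    (hb₂ : 0 < b₂) (hc₂ : 0 < c₂)
    (hw1 : ∀ i, w i ≤ 1)
    (hwlo : ∀ i, c₂ * (n : ℝ) ^ (-b₂) ≤ w i)
    (hsum : (n : ℝ) - c₁ * (n : ℝ) ^ b₁ ≤ ∑ i, w i)
    (hn : max (c₂ ^ (-(1 / b₂))) ((2 * c₂) ^ (1 / b₂)) < (n : ℝ)) :
    Real.exp (-(4 * b₂ * c₁ * (n : ℝ) ^ b₁ * Real.log n)) ≤ ∏ i, w i := by
  obtain ⟨hn_inv, hn_two⟩ := max_lt_iff.1 hn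
  have hδ : 0 < c₂ * (n : ℝ) ^ (-b₂) :=
    mul_pos hc₂ (rpow_pos_of_pos ((rpow_pos_of_pos hc₂ _).trans hn_inv) _)
  have hlogδ := neg_two_mul_log_le_log_mul_rpow_neg hc₂ hb₂ hn_inv
  have hdeficit_nonneg : 0 ≤ ∑ i, (1 - w i) := sum_nonneg fun i _ => sub_nonneg.2 (hw1 i)
  have hdeficit : ∑ i, (1 - w i) ≤ c₁ * (n : ℝ) ^ b₁ := by
    simp only [sum_sub_distrib, sum_const, card_univ, Fintype.card_fin, nsmul_eq_mul, mul_one]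
    linarith
  refine le_trans ?_ (exp_two_mul_log_mul_sum_one_sub_le_prod hδ
    (mul_rpow_neg_le_half hc₂.le hb₂ hn_two) hwlo hw1)
  rw [exp_le_exp]
  nlinarith [mul_nonneg hb₂.le (log_natCast_nonneg n)]

/-- If `w₁,…,wₙ ∈ [0,1]` have sum at least `n − c₁ n^{b₁}` and each `wᵢ ≥ c₂ n^{−b₂}`,
with `0 < b₂ < b₁ < 1`, `c₁ > 0`, `c₂ > 0`, then for all
`n > max{c₂^{−1/b₂}, (2c₂)^{1/b₂}}`, `∏ᵢ wᵢ ≥ exp(−4 b₂ c₁ n^{b₁} log n)`. -/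
theorem stmt4 (n : ℕ) (w : Fin n → ℝ) (c₁ c₂ b₁ b₂ : ℝ)
    (hb₂ : 0 < b₂) (hb : b₂ < b₁) (hb₁ : b₁ < 1) (hc₁ : 0 < c₁) (hc₂ : 0 < c₂)
    (hw0 : ∀ i, 0 ≤ w i) (hw1 : ∀ i, w i ≤ 1)
    (hwlo : ∀ i, c₂ * (n : ℝ) ^ (-b₂) ≤ w i)
    (hsum : (n : ℝ) - c₁ * (n : ℝ) ^ b₁ ≤ ∑ i, w i)
    (hn : max (c₂ ^ (-(1 / b₂))) ((2 * c₂) ^ (1 / b₂)) < (n : ℝ)) :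
    Real.exp (-(4 * b₂ * c₁ * (n : ℝ) ^ b₁ * Real.log n)) ≤ ∏ i, w i :=
  stmt4_general n w c₁ c₂ b₁ b₂ hb₂ hc₂ hw1 hwlo hsum hn
end

section
/- For the Matérn spectral density f_{σ,α}(ω) = C·σ²α^{2ν}/(α² + ‖ω‖²)^{ν+d/2} with C = Γ(ν+d/2)/(Γ(ν)π^{d/2}), if σ²α^{2ν} = σ₀²α₀^{2ν}, then for all ω ∈ ℝ^d: min{(α₀/α)^{2ν+d}, 1} ≤ f_{σ,α}(ω)/f_{σ₀,α₀}(ω) ≤ max{(α₀/α)^{2ν+d}, 1}. -/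
/-!
Under the microergodic constraint the numerators of the two densities agree, so their ratio is
`((α₀² + ‖ω‖²) / (α² + ‖ω‖²)) ^ (ν + d/2)`. Adding `‖ω‖²` to numerator and denominator moves the
fraction `α₀² / α²` towards `1`, and `x ↦ x ^ (ν + d/2)` is monotone, so the ratio lies between
`(α₀² / α²) ^ (ν + d/2) = (α₀ / α) ^ (2ν + d)` and `1`.
-/

open Set

lemma add_div_add_mem_uIcc_div_one {a b t : ℝ} (ha : 0 < a) (ht : 0 ≤ t) :
    (b + t) / (a + t) ∈ uIcc (b / a) 1 := by
  have hat : 0 < a + t := by positivity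
  rw [mem_uIcc, div_le_one hat, one_le_div hat, div_le_div_iff₀ ha hat, div_le_div_iff₀ hat ha]
  rcases le_total b a with h | h
  · exact Or.inl ⟨by nlinarith, by linarith⟩
  · exact Or.inr ⟨by linarith, by nlinarith⟩

lemma rpow_mem_uIcc_rpow_one {x y p : ℝ} (hx : 0 ≤ x) (hp : 0 ≤ p) (hy : y ∈ uIcc x 1) :
    y ^ p ∈ uIcc (x ^ p) 1 := by
  have hmono : MonotoneOn (· ^ p) (uIcc x 1) :=
    (Real.monotoneOn_rpow_Ici_of_exponent_nonneg hp).mono fun z hz ↦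
      le_trans (le_min hx zero_le_one) hz.1
  simpa only [Real.one_rpow] using hmono.mapsTo_uIcc hy

noncomputable def maternSpectralDensity (ν : ℝ) (d : ℕ) (σ α : ℝ) (ω : EuclideanSpace ℝ (Fin d)) :
    ℝ :=
  Real.Gamma (ν + (d : ℝ) / 2) / Real.Gamma ν * (σ ^ 2 * α ^ (2 * ν)) /
    (Real.pi ^ ((d : ℝ) / 2) * (α ^ 2 + ‖ω‖ ^ 2) ^ (ν + (d : ℝ) / 2))

lemma maternSpectralDensity_div_eq {ν : ℝ} {d : ℕ} {σ σ₀ α α₀ : ℝ} (hν : 0 < ν) (hσ₀ : σ₀ ≠ 0)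
    (hα₀ : 0 < α₀) (hmicro : σ ^ 2 * α ^ (2 * ν) = σ₀ ^ 2 * α₀ ^ (2 * ν))
    (ω : EuclideanSpace ℝ (Fin d)) :
    maternSpectralDensity ν d σ α ω / maternSpectralDensity ν d σ₀ α₀ ω =
      ((α₀ ^ 2 + ‖ω‖ ^ 2) / (α ^ 2 + ‖ω‖ ^ 2)) ^ (ν + (d : ℝ) / 2) := by
  have hp : 0 < ν + (d : ℝ) / 2 := by positivity
  have hΓ : Real.Gamma (ν + (d : ℝ) / 2) / Real.Gamma ν ≠ 0 :=
    (div_pos (Real.Gamma_pos_of_pos hp) (Real.Gamma_pos_of_pos hν)).ne'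
  have hπ : Real.pi ^ ((d : ℝ) / 2) ≠ 0 := (Real.rpow_pos_of_pos Real.pi_pos _).ne'
  have hα₀ω : 0 < α₀ ^ 2 + ‖ω‖ ^ 2 := by positivity
  have hαω : 0 ≤ α ^ 2 + ‖ω‖ ^ 2 := by positivity
  have hB : (α₀ ^ 2 + ‖ω‖ ^ 2) ^ (ν + (d : ℝ) / 2) ≠ 0 := (Real.rpow_pos_of_pos hα₀ω _).ne'
  have hS : σ₀ ^ 2 * α₀ ^ (2 * ν) ≠ 0 := by positivity
  unfold maternSpectralDensity
  rw [hmicro, Real.div_rpow hα₀ω.le hαω]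
  field_simp

lemma div_rpow_two_mul_add {a b ν : ℝ} (ha : 0 ≤ a) (hb : 0 ≤ b) (d : ℕ) :
    (a / b) ^ (2 * ν + (d : ℝ)) = (a ^ 2 / b ^ 2) ^ (ν + (d : ℝ) / 2) := by
  rw [← div_pow, ← Real.rpow_natCast (a / b) 2, ← Real.rpow_mul (div_nonneg ha hb)]
  ring_nf

theorem stmt5_general (ν : ℝ) (d : ℕ) (hν : 0 < ν)
    (σ σ₀ α α₀ : ℝ) (hσ₀ : 0 < σ₀) (hα : 0 < α) (hα₀ : 0 < α₀)
    (hmicro : σ ^ 2 * α ^ (2 * ν) = σ₀ ^ 2 * α₀ ^ (2 * ν))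
    (ω : EuclideanSpace ℝ (Fin d)) :
    min ((α₀ / α) ^ (2 * ν + (d : ℝ))) 1 ≤
      (Real.Gamma (ν + (d : ℝ) / 2) / Real.Gamma ν * (σ ^ 2 * α ^ (2 * ν)) /
          (Real.pi ^ ((d : ℝ) / 2) * (α ^ 2 + ‖ω‖ ^ 2) ^ (ν + (d : ℝ) / 2))) /
        (Real.Gamma (ν + (d : ℝ) / 2) / Real.Gamma ν * (σ₀ ^ 2 * α₀ ^ (2 * ν)) /
          (Real.pi ^ ((d : ℝ) / 2) * (α₀ ^ 2 + ‖ω‖ ^ 2) ^ (ν + (d : ℝ) / 2))) ∧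
      (Real.Gamma (ν + (d : ℝ) / 2) / Real.Gamma ν * (σ ^ 2 * α ^ (2 * ν)) /
          (Real.pi ^ ((d : ℝ) / 2) * (α ^ 2 + ‖ω‖ ^ 2) ^ (ν + (d : ℝ) / 2))) /
        (Real.Gamma (ν + (d : ℝ) / 2) / Real.Gamma ν * (σ₀ ^ 2 * α₀ ^ (2 * ν)) /
          (Real.pi ^ ((d : ℝ) / 2) * (α₀ ^ 2 + ‖ω‖ ^ 2) ^ (ν + (d : ℝ) / 2)))
        ≤ max ((α₀ / α) ^ (2 * ν + (d : ℝ))) 1 := by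
  change maternSpectralDensity ν d σ α ω / maternSpectralDensity ν d σ₀ α₀ ω ∈
    uIcc ((α₀ / α) ^ (2 * ν + (d : ℝ))) 1
  rw [maternSpectralDensity_div_eq hν hσ₀.ne' hα₀ hmicro,
    div_rpow_two_mul_add hα₀.le hα.le]
  exact rpow_mem_uIcc_rpow_one (by positivity) (by positivity)
    (add_div_add_mem_uIcc_div_one (by positivity) (by positivity))

/-- For the Matérn spectral density
`f_{σ,α}(ω) = [Γ(ν+d/2)/Γ(ν)]·σ²α^{2ν}/(π^{d/2}(α² + ‖ω‖²)^{ν+d/2})`,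
if `σ²α^{2ν} = σ₀²α₀^{2ν}`, then for all `ω ∈ ℝ^d`:
`min{(α₀/α)^{2ν+d}, 1} ≤ f_{σ,α}(ω)/f_{σ₀,α₀}(ω) ≤ max{(α₀/α)^{2ν+d}, 1}`. -/
theorem stmt5 (ν : ℝ) (d : ℕ) (hν : 0 < ν) (hd : 1 ≤ d)
    (σ σ₀ α α₀ : ℝ) (hσ : 0 < σ) (hσ₀ : 0 < σ₀) (hα : 0 < α) (hα₀ : 0 < α₀)
    (hmicro : σ ^ 2 * α ^ (2 * ν) = σ₀ ^ 2 * α₀ ^ (2 * ν))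
    (ω : EuclideanSpace ℝ (Fin d)) :
    min ((α₀ / α) ^ (2 * ν + (d : ℝ))) 1 ≤
      (Real.Gamma (ν + (d : ℝ) / 2) / Real.Gamma ν * (σ ^ 2 * α ^ (2 * ν)) /
          (Real.pi ^ ((d : ℝ) / 2) * (α ^ 2 + ‖ω‖ ^ 2) ^ (ν + (d : ℝ) / 2))) /
        (Real.Gamma (ν + (d : ℝ) / 2) / Real.Gamma ν * (σ₀ ^ 2 * α₀ ^ (2 * ν)) /
          (Real.pi ^ ((d : ℝ) / 2) * (α₀ ^ 2 + ‖ω‖ ^ 2) ^ (ν + (d : ℝ) / 2))) ∧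
      (Real.Gamma (ν + (d : ℝ) / 2) / Real.Gamma ν * (σ ^ 2 * α ^ (2 * ν)) /
          (Real.pi ^ ((d : ℝ) / 2) * (α ^ 2 + ‖ω‖ ^ 2) ^ (ν + (d : ℝ) / 2))) /
        (Real.Gamma (ν + (d : ℝ) / 2) / Real.Gamma ν * (σ₀ ^ 2 * α₀ ^ (2 * ν)) /
          (Real.pi ^ ((d : ℝ) / 2) * (α₀ ^ 2 + ‖ω‖ ^ 2) ^ (ν + (d : ℝ) / 2)))
        ≤ max ((α₀ / α) ^ (2 * ν + (d : ℝ))) 1 :=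
  stmt5_general ν d hν σ σ₀ α α₀ hσ₀ hα hα₀ hmicro ω
end

section
/- The profile log-likelihood 𝓛̃ₙ(α) = −(n/2)·log(xᵀ R_α^{−1} x / n) − (1/2)·log det(R_α) for the Matérn model satisfies, for any 0 < α₁ < α₂ and any nonzero x ∈ ℝⁿ, (α₁/α₂)^{n(ν+d/2)} < exp{𝓛̃ₙ(α₂) − 𝓛̃ₙ(α₁)} < (α₂/α₁)^{n(ν+d/2)}. -/
/-!
Write `qᵢ = xᵀRᵢ⁻¹x` and `Dᵢ = det Rᵢ`; the exponent is `(n/2) log(q₁/q₂) + (1/2) log(D₁/D₂)`.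
The Loewner inequality `α₁^{2ν}R₁⁻¹ ≺ α₂^{2ν}R₂⁻¹` gives `q₁/q₂ < (α₂/α₁)^{2ν}` and the determinant
hypothesis gives `D₁/D₂ > (α₁/α₂)^{2νn}`. The Loewner inequality `α₁^d R₁ ≺ α₂^d R₂` gives, since
inversion reverses the Loewner order and the determinant is strictly monotone on it,
`q₁/q₂ > (α₁/α₂)^d` and `D₁/D₂ < (α₂/α₁)^{dn}`. Weighting with `n/2` and `1/2` yields the bounds.
-/

open Matrix
open scoped MatrixOrder

lemma Real.log_sub_log_lt_of_mul_lt {a b u v : ℝ} (ha : 0 < a) (hb : 0 < b) (hu : 0 < u)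
    (hv : 0 < v) (h : u * a < v * b) : Real.log a - Real.log b < Real.log v - Real.log u := by
  have := Real.log_lt_log (mul_pos hu ha) h
  rw [Real.log_mul hu.ne' ha.ne', Real.log_mul hv.ne' hb.ne'] at this
  linarith

lemma Real.inv_rpow_lt_exp_and_exp_lt_rpow_of_abs_lt {r c L : ℝ} (hr : 0 < r)
    (h : |L| < c * Real.log r) : r⁻¹ ^ c < Real.exp L ∧ Real.exp L < r ^ c := by
  rw [Real.rpow_def_of_pos (inv_pos.mpr hr), Real.rpow_def_of_pos hr, Real.log_inv,
    Real.exp_lt_exp, Real.exp_lt_exp]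
  obtain ⟨hlo, hhi⟩ := abs_lt.mp h
  constructor <;> linarith

namespace Matrix

variable {m : Type*} [Fintype m]

lemma dotProduct_mulVec_lt_of_posDef_sub {A B : Matrix m m ℝ} (h : (A - B).PosDef)
    {x : m → ℝ} (hx : x ≠ 0) : x ⬝ᵥ B *ᵥ x < x ⬝ᵥ A *ᵥ x := by
  simpa [sub_mulVec] using h.dotProduct_mulVec_pos hx

variable [DecidableEq m]

lemma dotProduct_inv_mulVec_lt_of_posDef_sub {A B : Matrix m m ℝ} (hA : A.PosDef)
    (hB : B.PosDef) (hAB : (A - B).PosDef) {x : m → ℝ} (hx : x ≠ 0) :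
    x ⬝ᵥ A⁻¹ *ᵥ x < x ⬝ᵥ B⁻¹ *ᵥ x := by
  set y := A⁻¹ *ᵥ x
  set w := B⁻¹ *ᵥ x
  have hAy : A *ᵥ y = x := by simp [y, mulVec_mulVec, mul_nonsing_inv A hA.det_pos.ne'.isUnit]
  have hBw : B *ᵥ w = x := by simp [w, mulVec_mulVec, mul_nonsing_inv B hB.det_pos.ne'.isUnit]
  have hy : y ≠ 0 := fun h0 => hx (by rw [← hAy, h0, mulVec_zero])
  have hwBy : w ⬝ᵥ B *ᵥ y = x ⬝ᵥ y := by
    rw [dotProduct_mulVec, ← hB.1.eq, conjTranspose_eq_transpose_of_trivial, vecMul_transpose, hBw]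
  have hstrict : y ⬝ᵥ B *ᵥ y < y ⬝ᵥ x := hAy ▸ dotProduct_mulVec_lt_of_posDef_sub hAB hy
  -- `0 ≤ (y - w)ᵀ B (y - w) = yᵀ B y - 2 xᵀ y + xᵀ w`, and `yᵀ B y < xᵀ y`
  have hnonneg : 0 ≤ (y - w) ⬝ᵥ B *ᵥ (y - w) := by
    simpa using hB.posSemidef.dotProduct_mulVec_nonneg (y - w)
  simp only [mulVec_sub, dotProduct_sub, sub_dotProduct, hwBy, hBw] at hnonneg
  rw [dotProduct_comm y x] at hstrict hnonneg
  rw [dotProduct_comm w x] at hnonneg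
  change x ⬝ᵥ y < x ⬝ᵥ w
  linarith

lemma IsHermitian.one_lt_eigenvalues {A : Matrix m m ℝ} (hA : A.IsHermitian)
    (h : (A - 1).PosDef) (i : m) : 1 < hA.eigenvalues i := by
  set v := hA.eigenvectorBasis i
  have hv : v.ofLp ⬝ᵥ v.ofLp = 1 := by
    have := real_inner_self_eq_norm_sq v
    rw [show ‖v‖ = 1 from hA.eigenvectorBasis.norm_eq_one i, one_pow,
      EuclideanSpace.inner_eq_star_dotProduct] at this
    simpa using this
  have hv0 : v.ofLp ≠ 0 := fun h0 => by simp [h0] at hv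
  have hpos := h.dotProduct_mulVec_pos hv0
  rw [hA.eigenvalues_eq i]
  simp only [star_trivial, sub_mulVec, one_mulVec, dotProduct_sub, hv] at hpos
  simpa using hpos

lemma one_lt_det_of_posDef_sub_one [Nonempty m] {A : Matrix m m ℝ} (h : (A - 1).PosDef) :
    1 < A.det := by
  have hA : A.IsHermitian := by simpa using h.1.add isHermitian_one
  have := Finset.prod_lt_prod_of_nonempty (fun _ _ => one_pos)
    (fun i _ => hA.one_lt_eigenvalues h i) Finset.univ_nonempty
  simpa [hA.det_eq_prod_eigenvalues] using this

lemma det_lt_det_of_posDef_sub [Nonempty m] {A B : Matrix m m ℝ} (hB : B.PosDef)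
    (hAB : (A - B).PosDef) : B.det < A.det := by
  -- conjugating by `S = B^{1/2}` reduces to the case `B = 1`
  set S := CFC.sqrt B
  have hS : S.PosDef := (IsStrictlyPositive.sqrt B hB.isStrictlyPositive).posDef
  have hSS : S * S = B := CFC.sqrt_mul_sqrt_self B hB.posSemidef.nonneg
  have hSu : IsUnit S.det := hS.det_pos.ne'.isUnit
  have hSinv : (S⁻¹)ᴴ = S⁻¹ := by rw [conjTranspose_nonsing_inv, hS.1.eq]
  have hsub : (S⁻¹ * A * S⁻¹ - 1).PosDef := by
    have := hAB.conjTranspose_mul_mul_same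
      (mulVec_injective_iff_isUnit.mpr (isUnit_nonsing_inv_iff.mpr hS.isUnit))
    rw [hSinv, mul_sub, sub_mul, ← hSS] at this
    simpa [← mul_assoc, mul_assoc _ S, nonsing_inv_mul _ hSu, mul_nonsing_inv _ hSu] using this
  have hdet : (S⁻¹ * A * S⁻¹).det = A.det / B.det := by
    rw [← hSS, det_mul, det_mul, det_mul, det_nonsing_inv, Ring.inverse_eq_inv']
    field_simp
  simpa [hdet, one_lt_div hB.det_pos] using one_lt_det_of_posDef_sub_one hsub

variable {R₁ R₂ : Matrix m m ℝ} {c₁ c₂ : ℝ}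

lemma log_dotProduct_inv_mulVec_sub_lt_of_posDef_smul_inv_sub (hR₁ : R₁.PosDef)
    (hR₂ : R₂.PosDef) (hc₁ : 0 < c₁) (hc₂ : 0 < c₂) (h : (c₂ • R₂⁻¹ - c₁ • R₁⁻¹).PosDef)
    {x : m → ℝ} (hx : x ≠ 0) :
    Real.log (x ⬝ᵥ R₁⁻¹ *ᵥ x) - Real.log (x ⬝ᵥ R₂⁻¹ *ᵥ x) < Real.log c₂ - Real.log c₁ :=
  Real.log_sub_log_lt_of_mul_lt (by simpa using hR₁.inv.dotProduct_mulVec_pos hx)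
    (by simpa using hR₂.inv.dotProduct_mulVec_pos hx) hc₁ hc₂
    (by simpa [smul_mulVec, dotProduct_smul] using dotProduct_mulVec_lt_of_posDef_sub h hx)

lemma log_sub_lt_log_dotProduct_inv_mulVec_sub_of_posDef_smul_sub (hR₁ : R₁.PosDef)
    (hR₂ : R₂.PosDef) (hc₁ : 0 < c₁) (hc₂ : 0 < c₂) (h : (c₂ • R₂ - c₁ • R₁).PosDef)
    {x : m → ℝ} (hx : x ≠ 0) :
    Real.log c₁ - Real.log c₂ < Real.log (x ⬝ᵥ R₁⁻¹ *ᵥ x) - Real.log (x ⬝ᵥ R₂⁻¹ *ᵥ x) := by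
  have hlt := dotProduct_inv_mulVec_lt_of_posDef_sub (hR₂.smul hc₂) (hR₁.smul hc₁) h hx
  have := invertibleOfNonzero hc₁.ne'
  have := invertibleOfNonzero hc₂.ne'
  rw [inv_smul _ _ hR₁.det_pos.ne'.isUnit, inv_smul _ _ hR₂.det_pos.ne'.isUnit] at hlt
  have := Real.log_sub_log_lt_of_mul_lt (by simpa using hR₂.inv.dotProduct_mulVec_pos hx)
    (by simpa using hR₁.inv.dotProduct_mulVec_pos hx) (inv_pos.mpr hc₂) (inv_pos.mpr hc₁)
    (by simpa [smul_mulVec, dotProduct_smul] using hlt)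
  rw [Real.log_inv, Real.log_inv] at this
  linarith

lemma log_det_sub_lt_of_posDef_smul_sub [Nonempty m] (hR₁ : R₁.PosDef) (hR₂ : R₂.PosDef)
    (hc₁ : 0 < c₁) (hc₂ : 0 < c₂) (h : (c₂ • R₂ - c₁ • R₁).PosDef) :
    Real.log R₁.det - Real.log R₂.det < Fintype.card m * (Real.log c₂ - Real.log c₁) := by
  have hlt := det_lt_det_of_posDef_sub (hR₁.smul hc₁) h
  rw [det_smul, det_smul] at hlt
  have := Real.log_sub_log_lt_of_mul_lt hR₁.det_pos hR₂.det_pos (pow_pos hc₁ _) (pow_pos hc₂ _) hlt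
  rwa [Real.log_pow, Real.log_pow, ← mul_sub] at this

lemma log_sub_lt_log_det_sub_of_det_smul_inv_lt (hR₁ : R₁.PosDef) (hR₂ : R₂.PosDef)
    (hc₁ : 0 < c₁) (hc₂ : 0 < c₂) (h : (c₁ • R₁⁻¹).det < (c₂ • R₂⁻¹).det) :
    Fintype.card m * (Real.log c₁ - Real.log c₂) < Real.log R₁.det - Real.log R₂.det := by
  rw [det_smul, det_smul, det_nonsing_inv, det_nonsing_inv, Ring.inverse_eq_inv'] at h
  have := Real.log_sub_log_lt_of_mul_lt (inv_pos.mpr hR₁.det_pos) (inv_pos.mpr hR₂.det_pos)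
    (pow_pos hc₁ _) (pow_pos hc₂ _) h
  rw [Real.log_pow, Real.log_pow, Real.log_inv, Real.log_inv] at this
  linarith

end Matrix

theorem stmt9_general (n : ℕ) (d : ℕ) (ν : ℝ)
    (α₁ α₂ : ℝ) (hα₁ : 0 < α₁) (hα : α₁ < α₂)
    (R₁ R₂ : Matrix (Fin n) (Fin n) ℝ) (hR₁ : R₁.PosDef) (hR₂ : R₂.PosDef)
    (hA : (α₂ ^ (2 * ν) • R₂⁻¹ - α₁ ^ (2 * ν) • R₁⁻¹).PosDef)
    (hdet : (α₁ ^ (2 * ν) • R₁⁻¹).det < (α₂ ^ (2 * ν) • R₂⁻¹).det)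
    (hB : (α₂ ^ d • R₂ - α₁ ^ d • R₁).PosDef)
    (x : Fin n → ℝ) (hx : x ≠ 0) :
    (α₁ / α₂) ^ ((n : ℝ) * (ν + (d : ℝ) / 2)) <
      Real.exp ((-((n : ℝ) / 2) * Real.log (x ⬝ᵥ R₂⁻¹ *ᵥ x / n) - (1 / 2) * Real.log R₂.det) -
        (-((n : ℝ) / 2) * Real.log (x ⬝ᵥ R₁⁻¹ *ᵥ x / n) - (1 / 2) * Real.log R₁.det)) ∧
    Real.exp ((-((n : ℝ) / 2) * Real.log (x ⬝ᵥ R₂⁻¹ *ᵥ x / n) - (1 / 2) * Real.log R₂.det) -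
        (-((n : ℝ) / 2) * Real.log (x ⬝ᵥ R₁⁻¹ *ᵥ x / n) - (1 / 2) * Real.log R₁.det)) <
      (α₂ / α₁) ^ ((n : ℝ) * (ν + (d : ℝ) / 2)) := by
  obtain ⟨i, -⟩ := Function.ne_iff.mp hx
  have hn : (0 : ℝ) < n := Nat.cast_pos.mpr (Fin.pos i)
  have : Nonempty (Fin n) := ⟨i⟩
  have hα₂ : 0 < α₂ := hα₁.trans hα
  have hq₁ : 0 < x ⬝ᵥ R₁⁻¹ *ᵥ x := by simpa using hR₁.inv.dotProduct_mulVec_pos hx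
  have hq₂ : 0 < x ⬝ᵥ R₂⁻¹ *ᵥ x := by simpa using hR₂.inv.dotProduct_mulVec_pos hx
  have hν₁ := Real.rpow_pos_of_pos hα₁ (2 * ν)
  have hν₂ := Real.rpow_pos_of_pos hα₂ (2 * ν)
  have hq_upper := log_dotProduct_inv_mulVec_sub_lt_of_posDef_smul_inv_sub hR₁ hR₂ hν₁ hν₂ hA hx
  have hq_lower := log_sub_lt_log_dotProduct_inv_mulVec_sub_of_posDef_smul_sub hR₁ hR₂
    (pow_pos hα₁ d) (pow_pos hα₂ d) hB hx
  have hdet_upper := log_det_sub_lt_of_posDef_smul_sub hR₁ hR₂ (pow_pos hα₁ d) (pow_pos hα₂ d) hB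
  have hdet_lower := log_sub_lt_log_det_sub_of_det_smul_inv_lt hR₁ hR₂ hν₁ hν₂ hdet
  simp only [Real.log_rpow hα₁, Real.log_rpow hα₂, Real.log_pow, Fintype.card_fin]
    at hq_upper hq_lower hdet_upper hdet_lower
  rw [← inv_div α₂ α₁]
  refine Real.inv_rpow_lt_exp_and_exp_lt_rpow_of_abs_lt (div_pos hα₂ hα₁) ?_
  rw [Real.log_div hq₁.ne' hn.ne', Real.log_div hq₂.ne' hn.ne', Real.log_div hα₂.ne' hα₁.ne',
    abs_lt]
  constructor <;> linarith [mul_lt_mul_of_pos_left hq_upper hn, mul_lt_mul_of_pos_left hq_lower hn]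

/-- The profile log-likelihood
`𝓛̃ₙ(α) = −(n/2)·log(xᵀR_α⁻¹x/n) − (1/2)·log det R_α` of the Matérn model satisfies,
for `0 < α₁ < α₂` and nonzero `x`,
`(α₁/α₂)^{n(ν+d/2)} < exp{𝓛̃ₙ(α₂) − 𝓛̃ₙ(α₁)} < (α₂/α₁)^{n(ν+d/2)}`.
The two positive-definiteness facts from the Matérn spectral analysis are assumed. -/
theorem stmt9 (n : ℕ) (hn : 0 < n) (d : ℕ) (hd : d = 1 ∨ d = 2 ∨ d = 3) (ν : ℝ) (hν : 0 < ν)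
    (α₁ α₂ : ℝ) (hα₁ : 0 < α₁) (hα : α₁ < α₂)
    (R₁ R₂ : Matrix (Fin n) (Fin n) ℝ) (hR₁ : R₁.PosDef) (hR₂ : R₂.PosDef)
    (hA : (α₂ ^ (2 * ν) • R₂⁻¹ - α₁ ^ (2 * ν) • R₁⁻¹).PosDef)
    (hdet : (α₁ ^ (2 * ν) • R₁⁻¹).det < (α₂ ^ (2 * ν) • R₂⁻¹).det)
    (hB : (α₂ ^ d • R₂ - α₁ ^ d • R₁).PosDef)
    (x : Fin n → ℝ) (hx : x ≠ 0) :
    (α₁ / α₂) ^ ((n : ℝ) * (ν + (d : ℝ) / 2)) <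
      Real.exp ((-((n : ℝ) / 2) * Real.log (x ⬝ᵥ R₂⁻¹ *ᵥ x / n) - (1 / 2) * Real.log R₂.det) -
        (-((n : ℝ) / 2) * Real.log (x ⬝ᵥ R₁⁻¹ *ᵥ x / n) - (1 / 2) * Real.log R₁.det)) ∧
    Real.exp ((-((n : ℝ) / 2) * Real.log (x ⬝ᵥ R₂⁻¹ *ᵥ x / n) - (1 / 2) * Real.log R₂.det) -
        (-((n : ℝ) / 2) * Real.log (x ⬝ᵥ R₁⁻¹ *ᵥ x / n) - (1 / 2) * Real.log R₁.det)) <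
      (α₂ / α₁) ^ ((n : ℝ) * (ν + (d : ℝ) / 2)) :=
  stmt9_general n d ν α₁ α₂ hα₁ hα R₁ R₂ hR₁ hR₂ hA hdet hB x hx
end

section
/- If Xₙ ~ N(0, σ₀²R_{α₀}) with R_{α₀} positive definite, and θ̃_{α₀} = α₀^{2ν}·XₙᵀR_{α₀}^{−1}Xₙ/n, θ₀ = σ₀²α₀^{2ν}, then for all sufficiently large n, P(√n·|θ̃_{α₀} − θ₀| > 4θ₀ log n) ≤ 2·exp(−(log n)²). -/
open MeasureTheory ProbabilityTheory Matrix

/-!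
Write `Xₙ = σ₀ Aₙ Zₙ` with `Aₙ Aₙᵀ = Rₙ`. Then `Xₙᵀ Rₙ⁻¹ Xₙ = σ₀² S` with `S = ‖Zₙ‖²` a χ²ₙ
variable, and `√n |θ̃ − θ₀| = θ₀ |S − n| / √n`. The χ² moment generating function satisfies
`(1 − 2t)^{−1/2} ≤ exp (t + 4t²)` for `t ≤ 1/4`, so Chernoff's bound at `t = ±u/(8n)` gives
`P(|S − n| ≥ u) ≤ 2 exp (−u²/(16n))` for `0 ≤ u ≤ 2n`. Take `u = 4 √n log n`, which is at most
`2n` as soon as `2 log n ≤ √n`.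
-/

open Real Filter Finset

lemma mulVec_dotProduct_inv_mul_transpose_mulVec {m R : Type*} [Fintype m] [DecidableEq m]
    [CommRing R] (B : Matrix m m R) (hB : IsUnit (B * Bᵀ).det) (z : m → R) :
    B *ᵥ z ⬝ᵥ (B * Bᵀ)⁻¹ *ᵥ (B *ᵥ z) = z ⬝ᵥ z := by
  have hdet : IsUnit B.det := isUnit_of_mul_isUnit_left (det_mul B Bᵀ ▸ hB)
  have hdetT : IsUnit Bᵀ.det := by rwa [det_transpose]
  have hcancel : Bᵀ * ((B * Bᵀ)⁻¹ * B) = 1 := by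
    rw [Matrix.mul_inv_rev, ← Matrix.mul_assoc, ← Matrix.mul_assoc, mul_nonsing_inv _ hdetT,
      Matrix.one_mul, nonsing_inv_mul _ hdet]
  rw [mulVec_mulVec, dotProduct_mulVec, ← vecMul_transpose, vecMul_vecMul, hcancel, vecMul_one]

lemma div_one_sub_two_mul_le {t : ℝ} (ht : t ≤ 1 / 4) : t / (1 - 2 * t) ≤ t + 4 * t ^ 2 := by
  rw [div_le_iff₀ (by linarith)]
  nlinarith [sq_nonneg t]

lemma inv_sqrt_one_sub_two_mul_le_exp {t : ℝ} (ht : t ≤ 1 / 4) :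
    (√(1 - 2 * t))⁻¹ ≤ exp (t + 4 * t ^ 2) := by
  have hc : 0 < 1 - 2 * t := by linarith
  have hinv : (1 - 2 * t)⁻¹ ≤ exp (2 * (t + 4 * t ^ 2)) :=
    calc (1 - 2 * t)⁻¹ = 2 * t / (1 - 2 * t) + 1 := by field_simp; ring
      _ ≤ exp (2 * t / (1 - 2 * t)) := add_one_le_exp _
      _ ≤ exp (2 * (t + 4 * t ^ 2)) := by
        rw [exp_le_exp, mul_div_assoc]
        exact mul_le_mul_of_nonneg_left (div_one_sub_two_mul_le ht) zero_le_two
  calc (√(1 - 2 * t))⁻¹ = √(1 - 2 * t)⁻¹ := (sqrt_inv _).symm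
    _ ≤ √(exp (2 * (t + 4 * t ^ 2))) := sqrt_le_sqrt hinv
    _ = exp (t + 4 * t ^ 2) := by rw [← exp_half, mul_div_cancel_left₀ _ two_ne_zero]

/-- For `t ≥ 1/2` both sides are junk values `0`. -/
lemma integral_exp_mul_sq_gaussianReal (t : ℝ) :
    ∫ x, exp (t * x ^ 2) ∂gaussianReal 0 1 = (√(1 - 2 * t))⁻¹ := by
  have hdensity : ∀ x : ℝ, gaussianPDFReal 0 1 x • exp (t * x ^ 2)
      = (√(2 * π))⁻¹ * exp (-(1 / 2 - t) * x ^ 2) := by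
    intro x
    simp only [gaussianPDFReal, NNReal.coe_one, mul_one, sub_zero, smul_eq_mul]
    rw [mul_assoc, ← exp_add]
    congr 2
    ring
  rw [integral_gaussianReal_eq_integral_smul one_ne_zero]
  simp_rw [hdensity]
  rw [integral_const_mul, integral_gaussian, ← sqrt_inv, ← sqrt_mul (by positivity), ← sqrt_inv]
  congr 1
  field_simp

section ChiSquared

variable {Ω ι : Type*} [MeasurableSpace Ω] {μ : Measure Ω}

lemma mgf_sq_of_map_eq_gaussianReal {Z : Ω → ℝ} (hZ : Measurable Z)
    (hlaw : μ.map Z = gaussianReal 0 1) (t : ℝ) :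
    mgf (fun ω => Z ω ^ 2) μ t = (√(1 - 2 * t))⁻¹ := by
  rw [mgf, ← integral_exp_mul_sq_gaussianReal, ← hlaw,
    integral_map hZ.aemeasurable (by fun_prop)]

variable [Fintype ι] {Z : ι → Ω → ℝ}

lemma mgf_sum_sq (hmeas : ∀ i, Measurable (Z i)) (hindep : iIndepFun Z μ)
    (hlaw : ∀ i, μ.map (Z i) = gaussianReal 0 1) (t : ℝ) :
    mgf (fun ω => ∑ i, Z i ω ^ 2) μ t = (√(1 - 2 * t))⁻¹ ^ Fintype.card ι := by
  have hsum : (fun ω => ∑ i, Z i ω ^ 2) = ∑ i, fun ω => Z i ω ^ 2 := by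
    ext ω; simp only [Finset.sum_apply]
  have hindep_sq : iIndepFun (fun i ω => Z i ω ^ 2) μ :=
    hindep.comp (fun _ x => x ^ 2) fun _ => by fun_prop
  rw [hsum, hindep_sq.mgf_sum (fun i => (hmeas i).pow_const 2)]
  simp only [mgf_sq_of_map_eq_gaussianReal (hmeas _) (hlaw _), prod_const, card_univ]

lemma integrable_exp_mul_sum_sq (hmeas : ∀ i, Measurable (Z i)) (hindep : iIndepFun Z μ)
    (hlaw : ∀ i, μ.map (Z i) = gaussianReal 0 1) {t : ℝ} (ht : t < 1 / 2) :
    Integrable (fun ω => exp (t * ∑ i, Z i ω ^ 2)) μ := by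
  refine .of_integral_ne_zero ?_
  have hc : 0 < 1 - 2 * t := by linarith
  rw [← mgf, mgf_sum_sq hmeas hindep hlaw]
  positivity

lemma mgf_sum_sq_le (hmeas : ∀ i, Measurable (Z i)) (hindep : iIndepFun Z μ)
    (hlaw : ∀ i, μ.map (Z i) = gaussianReal 0 1) {t : ℝ} (ht : t ≤ 1 / 4) :
    mgf (fun ω => ∑ i, Z i ω ^ 2) μ t ≤ exp (Fintype.card ι * (t + 4 * t ^ 2)) := by
  rw [mgf_sum_sq hmeas hindep hlaw, exp_nat_mul]
  exact pow_le_pow_left₀ (by positivity) (inv_sqrt_one_sub_two_mul_le_exp ht) _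

lemma chernoff_exponent_eq (n u : ℝ) :
    -(u / (8 * n)) * (n + u) + n * (u / (8 * n) + 4 * (u / (8 * n)) ^ 2) = -u ^ 2 / (16 * n) := by
  rcases eq_or_ne n 0 with rfl | hn
  · simp
  · field_simp
    ring

lemma measureReal_card_add_le_sum_sq_le (hmeas : ∀ i, Measurable (Z i))
    (hindep : iIndepFun Z μ) (hlaw : ∀ i, μ.map (Z i) = gaussianReal 0 1) {u : ℝ} (hu₀ : 0 ≤ u)
    (hu : u ≤ 2 * Fintype.card ι) :
    μ.real {ω | Fintype.card ι + u ≤ ∑ i, Z i ω ^ 2} ≤ exp (-u ^ 2 / (16 * Fintype.card ι)) := by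
  have := hindep.isProbabilityMeasure
  set n : ℝ := (Fintype.card ι : ℝ)
  set t := u / (8 * n) with ht_def
  have ht : t ≤ 1 / 4 := div_le_of_le_mul₀ (by positivity) (by norm_num) (by linarith)
  calc μ.real {ω | n + u ≤ ∑ i, Z i ω ^ 2}
      ≤ exp (-t * (n + u)) * mgf (fun ω => ∑ i, Z i ω ^ 2) μ t :=
        measure_ge_le_exp_mul_mgf _ (by positivity)
          (integrable_exp_mul_sum_sq hmeas hindep hlaw (by linarith))
    _ ≤ exp (-t * (n + u)) * exp (n * (t + 4 * t ^ 2)) := by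
        gcongr
        exact mgf_sum_sq_le hmeas hindep hlaw ht
    _ = exp (-u ^ 2 / (16 * n)) := by rw [← exp_add, ← chernoff_exponent_eq, ← ht_def]

lemma measureReal_sum_sq_le_card_sub_le (hmeas : ∀ i, Measurable (Z i))
    (hindep : iIndepFun Z μ) (hlaw : ∀ i, μ.map (Z i) = gaussianReal 0 1) {u : ℝ}
    (hu₀ : 0 ≤ u) :
    μ.real {ω | ∑ i, Z i ω ^ 2 ≤ Fintype.card ι - u} ≤ exp (-u ^ 2 / (16 * Fintype.card ι)) := by
  have := hindep.isProbabilityMeasure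
  set n : ℝ := (Fintype.card ι : ℝ)
  set t := -u / (8 * n) with ht_def
  have ht : t ≤ 0 := div_nonpos_of_nonpos_of_nonneg (by linarith) (by positivity)
  calc μ.real {ω | ∑ i, Z i ω ^ 2 ≤ n - u}
      ≤ exp (-t * (n - u)) * mgf (fun ω => ∑ i, Z i ω ^ 2) μ t :=
        measure_le_le_exp_mul_mgf _ ht
          (integrable_exp_mul_sum_sq hmeas hindep hlaw (by linarith))
    _ ≤ exp (-t * (n - u)) * exp (n * (t + 4 * t ^ 2)) := by
        gcongr
        exact mgf_sum_sq_le hmeas hindep hlaw (by linarith)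
    _ = exp (-u ^ 2 / (16 * n)) := by
        rw [← exp_add, ← neg_sq u, ← chernoff_exponent_eq, ← ht_def, sub_eq_add_neg]

lemma measureReal_le_abs_sum_sq_sub_card_le (hmeas : ∀ i, Measurable (Z i))
    (hindep : iIndepFun Z μ) (hlaw : ∀ i, μ.map (Z i) = gaussianReal 0 1) {u : ℝ} (hu₀ : 0 ≤ u)
    (hu : u ≤ 2 * Fintype.card ι) :
    μ.real {ω | u ≤ |∑ i, Z i ω ^ 2 - Fintype.card ι|}
      ≤ 2 * exp (-u ^ 2 / (16 * Fintype.card ι)) := by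
  have := hindep.isProbabilityMeasure
  have hsplit : {ω | u ≤ |∑ i, Z i ω ^ 2 - Fintype.card ι|}
      ⊆ {ω | Fintype.card ι + u ≤ ∑ i, Z i ω ^ 2} ∪ {ω | ∑ i, Z i ω ^ 2 ≤ Fintype.card ι - u} := by
    intro ω hω
    rcases le_abs'.mp (Set.mem_ofPred_eq ▸ hω) with h | h
    · exact Or.inr (by simp only [Set.mem_ofPred_eq]; linarith)
    · exact Or.inl (by simp only [Set.mem_ofPred_eq]; linarith)
  calc _ ≤ _ := measureReal_mono hsplit
    _ ≤ _ := measureReal_union_le _ _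
    _ ≤ _ := by
      linarith [measureReal_card_add_le_sum_sq_le hmeas hindep hlaw hu₀ hu,
        measureReal_sum_sq_le_card_sub_le hmeas hindep hlaw hu₀ (Z := Z)]

end ChiSquared

lemma eventually_two_mul_log_le_sqrt : ∀ᶠ x : ℝ in atTop, 2 * log x ≤ √x := by
  filter_upwards [(isLittleO_log_rpow_atTop one_half_pos).bound one_half_pos,
    eventually_ge_atTop 1] with x hx hx1
  rw [norm_of_nonneg (log_nonneg hx1), norm_of_nonneg (by positivity), ← sqrt_eq_rpow] at hx
  linarith

lemma le_abs_sub_of_lt_sqrt_mul_abs_sub {θ n s L : ℝ} (hθ : 0 < θ) (hn : 0 < n)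
    (h : 4 * θ * L < √n * |θ * s / n - θ|) : 4 * √n * L ≤ |s - n| := by
  have hsqrt : 0 < √n := sqrt_pos.mpr hn
  have hrescale : √n * |θ * s / n - θ| = θ * (|s - n| / √n) := by
    rw [show θ * s / n - θ = θ * (s - n) / n by field_simp, abs_div, abs_mul, abs_of_pos hθ,
      abs_of_pos hn]
    field_simp
    rw [sq_sqrt hn.le]
  rw [hrescale, mul_assoc, mul_left_comm, mul_lt_mul_iff_right₀ hθ, lt_div_iff₀ hsqrt] at h
  linarith

theorem stmt12_general {Ω : Type*} [MeasureSpace Ω]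
    (σ₀ α₀ ν : ℝ) (hσ₀ : 0 < σ₀) (hα₀ : 0 < α₀)
    (R : (n : ℕ) → Matrix (Fin n) (Fin n) ℝ) (hR : ∀ n, (R n).PosDef)
    (A : (n : ℕ) → Matrix (Fin n) (Fin n) ℝ) (hA : ∀ n, A n * (A n)ᵀ = R n)
    (Z : (n : ℕ) → Fin n → Ω → ℝ) (hmeas : ∀ n i, Measurable (Z n i))
    (hindep : ∀ n, iIndepFun (Z n) volume)
    (hlaw : ∀ n i, Measure.map (Z n i) volume = gaussianReal 0 1)
    (X : (n : ℕ) → Ω → Fin n → ℝ)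
    (hX : ∀ n ω, X n ω = σ₀ • (A n *ᵥ fun i => Z n i ω)) :
    ∃ N : ℕ, ∀ n ≥ N,
      (volume {ω | 4 * (σ₀ ^ 2 * α₀ ^ (2 * ν)) * Real.log n <
          Real.sqrt n * |α₀ ^ (2 * ν) * (X n ω ⬝ᵥ (R n)⁻¹ *ᵥ X n ω) / n
            - σ₀ ^ 2 * α₀ ^ (2 * ν)|}).toReal
        ≤ 2 * Real.exp (-(Real.log n) ^ 2) := by
  obtain ⟨N, hN⟩ := eventually_atTop.mp <|
    (tendsto_natCast_atTop_atTop.eventually eventually_two_mul_log_le_sqrt).and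
      (eventually_ge_atTop 1)
  refine ⟨N, fun n hn => ?_⟩
  obtain ⟨hlog, hn1⟩ := hN n hn
  have hn0 : (0 : ℝ) < n := by exact_mod_cast hn1
  have := (hindep n).isProbabilityMeasure
  set θ := σ₀ ^ 2 * α₀ ^ (2 * ν)
  have hθ : 0 < θ := by positivity
  have hquad (ω : Ω) :
      α₀ ^ (2 * ν) * (X n ω ⬝ᵥ (R n)⁻¹ *ᵥ X n ω) = θ * ∑ i, Z n i ω ^ 2 := by
    have hdet : IsUnit (A n * (A n)ᵀ).det := by
      rw [hA n, ← isUnit_iff_isUnit_det]; exact (hR n).isUnit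
    rw [hX, ← hA n, mulVec_smul, smul_dotProduct, dotProduct_smul,
      mulVec_dotProduct_inv_mul_transpose_mulVec _ hdet]
    simp only [dotProduct, smul_eq_mul, sq]
    ring
  have hevent : {ω | 4 * θ * log n < √n * |α₀ ^ (2 * ν) * (X n ω ⬝ᵥ (R n)⁻¹ *ᵥ X n ω) / n - θ|}
      ⊆ {ω | 4 * √n * log n ≤ |∑ i, Z n i ω ^ 2 - Fintype.card (Fin n)|} := by
    intro ω hω
    rw [Set.mem_ofPred_eq, hquad] at hω
    simpa using le_abs_sub_of_lt_sqrt_mul_abs_sub hθ hn0 hω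
  calc _ ≤ _ := measureReal_mono hevent
    _ ≤ 2 * exp (-(4 * √n * log n) ^ 2 / (16 * Fintype.card (Fin n))) :=
        measureReal_le_abs_sum_sq_sub_card_le (hmeas n) (hindep n) (hlaw n) (by positivity) (by
          rw [Fintype.card_fin]
          nlinarith [mul_self_sqrt hn0.le, mul_le_mul_of_nonneg_left hlog (sqrt_nonneg (n : ℝ))])
    _ = 2 * exp (-(log n) ^ 2) := by
        rw [Fintype.card_fin, mul_pow, mul_pow, sq_sqrt hn0.le]
        congr 2
        field_simp
        ring

/-- If `Xₙ ~ N(0, σ₀²R_{α₀})` (realized as `Xₙ = σ₀·A·Z` with `A Aᵀ = R_{α₀}` and `Z`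
i.i.d. standard normal), `θ̃_{α₀} = α₀^{2ν}·XₙᵀR_{α₀}⁻¹Xₙ/n` and `θ₀ = σ₀²α₀^{2ν}`,
then for all sufficiently large `n`,
`P(√n·|θ̃_{α₀} − θ₀| > 4θ₀ log n) ≤ 2·exp(−(log n)²)`. -/
theorem stmt12 {Ω : Type*} [MeasureSpace Ω] [IsProbabilityMeasure (volume : Measure Ω)]
    (σ₀ α₀ ν : ℝ) (hσ₀ : 0 < σ₀) (hα₀ : 0 < α₀) (hν : 0 < ν)
    (R : (n : ℕ) → Matrix (Fin n) (Fin n) ℝ) (hR : ∀ n, (R n).PosDef)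
    (A : (n : ℕ) → Matrix (Fin n) (Fin n) ℝ) (hA : ∀ n, A n * (A n)ᵀ = R n)
    (Z : (n : ℕ) → Fin n → Ω → ℝ) (hmeas : ∀ n i, Measurable (Z n i))
    (hindep : ∀ n, iIndepFun (Z n) volume)
    (hlaw : ∀ n i, Measure.map (Z n i) volume = gaussianReal 0 1)
    (X : (n : ℕ) → Ω → Fin n → ℝ)
    (hX : ∀ n ω, X n ω = σ₀ • (A n *ᵥ fun i => Z n i ω)) :
    ∃ N : ℕ, ∀ n ≥ N,
      (volume {ω | 4 * (σ₀ ^ 2 * α₀ ^ (2 * ν)) * Real.log n <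
          Real.sqrt n * |α₀ ^ (2 * ν) * (X n ω ⬝ᵥ (R n)⁻¹ *ᵥ X n ω) / n
            - σ₀ ^ 2 * α₀ ^ (2 * ν)|}).toReal
        ≤ 2 * Real.exp (-(Real.log n) ^ 2) :=
  stmt12_general σ₀ α₀ ν hσ₀ hα₀ R hR A hA Z hmeas hindep hlaw X hX
end

section
/- Let p : (0,∞) → [0,∞) satisfy p(α) ≤ exp(−α^{δ₁}) for all α > n^{κ}, where δ₁ > 1/κ and κ ∈ (0,1/2) are constants, and let m > 0. Then for every c with m·κ > c > m/δ₁ and all sufficiently large n, ∫_{n^{κ}}^{∞} α^{n·m} p(α) dα ≤ exp(c·n·log n). -/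
/-!
Split `α ^ (n m) = exp (s · log α^δ₁)` with `s = n m / δ₁` and apply `log x ≤ x - 1` at
`x = α^δ₁ / (2 s)`: this gives `α ^ (n m) ≤ (2 s)^s · exp (α^δ₁ / 2)`, so half of the decay
`exp (-α^δ₁)` survives and, as `δ₁ > 1/κ > 2`, it dominates `exp (-α)`. The integral is then at
most `(2 s)^s = exp (s log (2 s))`, and `s log (2 s) ≤ c n log n` for large `n` because `c > m / δ₁`.
-/

open MeasureTheory Filter Real Set

lemma mul_log_le_mul_log_two_mul_add_half {s y : ℝ} (hs : 0 ≤ s) (hy : 0 < y) :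
    s * log y ≤ s * log (2 * s) + y / 2 := by
  rcases hs.eq_or_lt with rfl | hs
  · simp only [zero_mul, zero_add]; positivity
  have hsplit : log y = log (2 * s) + log (y / (2 * s)) := by
    rw [← log_mul (by positivity) (by positivity), mul_div_cancel₀ _ (by positivity)]
  have hlog : log (y / (2 * s)) ≤ y / (2 * s) - 1 := log_le_sub_one_of_pos (by positivity)
  calc s * log y = s * log (2 * s) + s * log (y / (2 * s)) := by rw [hsplit, mul_add]
    _ ≤ s * log (2 * s) + s * (y / (2 * s) - 1) := by gcongr
    _ = s * log (2 * s) + y / 2 - s := by field_simp; ring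
    _ ≤ s * log (2 * s) + y / 2 := by linarith

lemma rpow_le_exp_mul_log_add_half_rpow {t δ α : ℝ} (ht : 0 ≤ t) (hδ : 0 < δ) (hα : 0 < α) :
    α ^ t ≤ exp (t / δ * log (2 * (t / δ)) + α ^ δ / 2) := by
  have hexp : t * log α = t / δ * log (α ^ δ) := by
    rw [log_rpow hα]; field_simp
  rw [rpow_def_of_pos hα, exp_le_exp, mul_comm, hexp]
  exact mul_log_le_mul_log_two_mul_add_half (div_nonneg ht hδ.le) (rpow_pos_of_pos hα δ)

lemma self_le_rpow_div_two {α δ : ℝ} (hα : 2 ≤ α) (hδ : 2 ≤ δ) : α ≤ α ^ δ / 2 := by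
  have hsq : α ^ (2 : ℝ) ≤ α ^ δ := rpow_le_rpow_of_exponent_le (by linarith) hδ
  rw [rpow_two] at hsq
  nlinarith

lemma rpow_mul_exp_neg_rpow_le {t δ α : ℝ} (ht : 0 ≤ t) (hδ : 2 ≤ δ) (hα : 2 ≤ α) :
    α ^ t * exp (-(α ^ δ)) ≤ exp (t / δ * log (2 * (t / δ))) * exp (-α) := by
  calc α ^ t * exp (-(α ^ δ))
      ≤ exp (t / δ * log (2 * (t / δ)) + α ^ δ / 2) * exp (-(α ^ δ)) := by
        gcongr
        exact rpow_le_exp_mul_log_add_half_rpow ht (by linarith) (by linarith)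
    _ = exp (t / δ * log (2 * (t / δ))) * exp (-(α ^ δ / 2)) := by
        rw [← exp_add, ← exp_add]; ring_nf
    _ ≤ exp (t / δ * log (2 * (t / δ))) * exp (-α) := by
        gcongr
        exact self_le_rpow_div_two hα hδ

lemma setIntegral_Ioi_rpow_mul_le {f : ℝ → ℝ} {t δ a : ℝ} (ht : 0 ≤ t) (hδ : 2 ≤ δ) (ha : 2 ≤ a)
    (hf0 : ∀ α ∈ Ioi a, 0 ≤ f α) (hf : ∀ α ∈ Ioi a, f α ≤ exp (-(α ^ δ))) :
    ∫ α in Ioi a, α ^ t * f α ≤ exp (t / δ * log (2 * (t / δ))) := by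
  set K := exp (t / δ * log (2 * (t / δ)))
  have hdom : ∀ α ∈ Ioi a, α ^ t * f α ≤ K * exp (-α) := fun α hα =>
    have h2α : 2 ≤ α := ha.trans (le_of_lt hα)
    calc α ^ t * f α ≤ α ^ t * exp (-(α ^ δ)) :=
          mul_le_mul_of_nonneg_left (hf α hα) (rpow_nonneg (by linarith) t)
      _ ≤ K * exp (-α) := rpow_mul_exp_neg_rpow_le ht hδ h2α
  have hint : IntegrableOn (fun α => K * exp (-α)) (Ioi a) :=
    (integrableOn_exp_neg_Ioi a).const_mul K
  calc ∫ α in Ioi a, α ^ t * f α ≤ ∫ α in Ioi a, K * exp (-α) := by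
        refine integral_mono_of_nonneg ?_ hint
          ((ae_restrict_iff' measurableSet_Ioi).2 (.of_forall hdom))
        exact (ae_restrict_iff' measurableSet_Ioi).2 <| .of_forall fun α hα =>
          mul_nonneg (rpow_nonneg (by linarith [mem_Ioi.1 hα]) t) (hf0 α hα)
    _ = K * exp (-a) := by rw [integral_const_mul, integral_exp_neg_Ioi]
    _ ≤ K := mul_le_of_le_one_right (exp_pos _).le (exp_le_one_iff.2 (by linarith))

lemma eventually_mul_log_two_mul_le_mul_log {s c : ℝ} (hs : 0 < s) (hsc : s < c) :
    ∀ᶠ x in atTop, x * s * log (2 * (x * s)) ≤ c * x * log x := by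
  filter_upwards [tendsto_log_atTop.eventually_ge_atTop (s * log (2 * s) / (c - s)),
    eventually_gt_atTop 0] with x hlog hx
  rw [show 2 * (x * s) = x * (2 * s) by ring, log_mul hx.ne' (by positivity)]
  have := mul_le_mul_of_nonneg_left ((div_le_iff₀ (sub_pos.2 hsc)).1 hlog) hx.le
  linear_combination this

theorem stmt14_general (κ δ₁ m : ℝ) (hκ : κ ∈ Set.Ioo (0 : ℝ) (1 / 2)) (hδ : 1 / κ < δ₁)
    (hm : 0 < m) (p : ℝ → ℝ) (hp0 : ∀ α, 0 < α → 0 ≤ p α)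
    (hp : ∀ n : ℕ, ∀ α : ℝ, (n : ℝ) ^ κ < α → p α ≤ Real.exp (-(α ^ δ₁)))
    (c : ℝ) (hc₁ : m / δ₁ < c) :
    ∃ N : ℕ, ∀ n ≥ N,
      ∫ α in Set.Ioi ((n : ℝ) ^ κ), α ^ ((n : ℝ) * m) * p α
        ≤ Real.exp (c * n * Real.log n) := by
  obtain ⟨hκ0, hκ2⟩ := hκ
  have hδ₁ : 2 ≤ δ₁ := le_of_lt (lt_trans (by rw [lt_div_iff₀ hκ0]; linarith) hδ)
  have hlarge : ∀ᶠ n : ℕ in atTop, (2 : ℝ) ≤ (n : ℝ) ^ κ :=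
    ((tendsto_rpow_atTop hκ0).comp tendsto_natCast_atTop_atTop).eventually_ge_atTop 2
  have hlog := tendsto_natCast_atTop_atTop.eventually
    (eventually_mul_log_two_mul_le_mul_log (div_pos hm (by linarith)) hc₁)
  obtain ⟨N, hN⟩ := eventually_atTop.1 (hlarge.and hlog)
  refine ⟨N, fun n hn => ?_⟩
  obtain ⟨ha, hlog_n⟩ := hN n hn
  have hp0' : ∀ α ∈ Ioi ((n : ℝ) ^ κ), 0 ≤ p α := fun α hα => hp0 α (by linarith [mem_Ioi.1 hα])
  calc ∫ α in Ioi ((n : ℝ) ^ κ), α ^ ((n : ℝ) * m) * p α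
      ≤ exp ((n : ℝ) * m / δ₁ * log (2 * ((n : ℝ) * m / δ₁))) :=
        setIntegral_Ioi_rpow_mul_le (by positivity) hδ₁ ha hp0' (hp n)
    _ ≤ exp (c * n * log n) := by rw [exp_le_exp, mul_div_assoc]; exact hlog_n

/-- Let `p : (0,∞) → [0,∞)` satisfy `p(α) ≤ exp(−α^{δ₁})` for all `α > n^{κ}`, with
`δ₁ > 1/κ`, `κ ∈ (0,1/2)` and `m > 0`. Then for every `c` with `m/δ₁ < c < m·κ` and all
sufficiently large `n`, `∫_{n^{κ}}^{∞} α^{n·m} p(α) dα ≤ exp(c·n·log n)`. -/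
theorem stmt14 (κ δ₁ m : ℝ) (hκ : κ ∈ Set.Ioo (0 : ℝ) (1 / 2)) (hδ : 1 / κ < δ₁)
    (hm : 0 < m) (p : ℝ → ℝ) (hpmeas : Measurable p) (hp0 : ∀ α, 0 < α → 0 ≤ p α)
    (hp : ∀ n : ℕ, ∀ α : ℝ, (n : ℝ) ^ κ < α → p α ≤ Real.exp (-(α ^ δ₁)))
    (c : ℝ) (hc₁ : m / δ₁ < c) (hc₂ : c < m * κ) :
    ∃ N : ℕ, ∀ n ≥ N,
      ∫ α in Set.Ioi ((n : ℝ) ^ κ), α ^ ((n : ℝ) * m) * p α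
        ≤ Real.exp (c * n * Real.log n) :=
  stmt14_general κ δ₁ m hκ hδ hm p hp0 hp c hc₁
end

section
/- Suppose eigenvalues λ₁,…,λₙ ∈ (0, 1] satisfy λₖ ≥ (α₀/α)^{2ν+d} with α ≥ α₀, and Y₁,…,Yₙ are reals with ∑Yₖ² > 0. Then the quantity [(∑λₖ^{−1}Yₖ²/∑Yₖ²)·(∏λₖ)^{1/n}]^{−n/2} ≥ [1 + (∑(λₖ^{−1}−1)Yₖ²)/(∑Yₖ²)]^{−n/2}; in particular, if additionally ∑(λₖ^{−1}−1)Yₖ² ≤ n^{1/2−τ} and ∑Yₖ² ≥ n/2 for some τ ∈ (0,1/2), then this quantity is at least exp(−n^{1/2−τ}). -/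
/-!
The weighted mean `∑ λₖ⁻¹ Yₖ² / ∑ Yₖ²` equals `1 + ∑ (λₖ⁻¹ - 1) Yₖ² / ∑ Yₖ²`, and since
`0 < λₖ ≤ 1` the geometric mean `(∏ λₖ)^{1/n}` lies in `(0, 1]`; multiplying by it shrinks
the base, and a negative power of a smaller base is larger. For the second bound, `1 + x ≤ eˣ` gives
`(1 + x)^{-n/2} ≥ e^{-x n/2}`, and `x n/2 ≤ ∑ (λₖ⁻¹ - 1) Yₖ²` as soon as `∑ Yₖ² ≥ n/2`.
-/

open Finset Real

lemma sum_mul_div_sum_eq_one_add {ι : Type*} (s : Finset ι) (a w : ι → ℝ)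
    (hw : ∑ i ∈ s, w i ≠ 0) :
    (∑ i ∈ s, a i * w i) / ∑ i ∈ s, w i = 1 + (∑ i ∈ s, (a i - 1) * w i) / ∑ i ∈ s, w i := by
  simp only [sub_mul, one_mul, sum_sub_distrib]
  field_simp
  ring

lemma prod_rpow_mem_Ioc {ι : Type*} (s : Finset ι) {f : ι → ℝ} (h0 : ∀ i ∈ s, 0 < f i)
    (h1 : ∀ i ∈ s, f i ≤ 1) {r : ℝ} (hr : 0 ≤ r) : (∏ i ∈ s, f i) ^ r ∈ Set.Ioc 0 1 :=
  ⟨rpow_pos_of_pos (prod_pos h0) r,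
    rpow_le_one (prod_nonneg fun i hi => (h0 i hi).le) (prod_le_one (fun i hi => (h0 i hi).le) h1)
      hr⟩

lemma exp_neg_mul_le_one_add_rpow_neg {x m : ℝ} (hx : 0 ≤ x) (hm : 0 ≤ m) :
    exp (-(x * m)) ≤ (1 + x) ^ (-m) := by
  rw [exp_neg, rpow_neg (by linarith)]
  gcongr
  rw [exp_mul]
  gcongr
  linarith [add_one_le_exp x]

theorem stmt18_general (n : ℕ) (ν : ℝ) (d : ℕ)
    (α₀ α τ : ℝ) (hα₀ : 0 < α₀) (hαα : α₀ ≤ α)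
    (lam Y : Fin n → ℝ) (hlam1 : ∀ k, lam k ≤ 1)
    (hlamlo : ∀ k, (α₀ / α) ^ (2 * ν + (d : ℝ)) ≤ lam k)
    (hY : 0 < ∑ k, Y k ^ 2) :
    (1 + (∑ k, ((lam k)⁻¹ - 1) * Y k ^ 2) / ∑ k, Y k ^ 2) ^ (-(n : ℝ) / 2)
        ≤ ((∑ k, (lam k)⁻¹ * Y k ^ 2) / (∑ k, Y k ^ 2)
            * (∏ k, lam k) ^ ((1 : ℝ) / n)) ^ (-(n : ℝ) / 2) ∧
    ((∑ k, ((lam k)⁻¹ - 1) * Y k ^ 2 ≤ (n : ℝ) ^ ((1 : ℝ) / 2 - τ)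
        ∧ (n : ℝ) / 2 ≤ ∑ k, Y k ^ 2) →
      Real.exp (-(n : ℝ) ^ ((1 : ℝ) / 2 - τ))
        ≤ ((∑ k, (lam k)⁻¹ * Y k ^ 2) / (∑ k, Y k ^ 2)
            * (∏ k, lam k) ^ ((1 : ℝ) / n)) ^ (-(n : ℝ) / 2)) := by
  have hlam_pos : ∀ k, 0 < lam k := fun k =>
    (rpow_pos_of_pos (div_pos hα₀ (hα₀.trans_le hαα)) _).trans_le (hlamlo k)
  set T := ∑ k, Y k ^ 2
  set S := ∑ k, ((lam k)⁻¹ - 1) * Y k ^ 2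
  have hS : 0 ≤ S := sum_nonneg fun k _ =>
    mul_nonneg (sub_nonneg.2 ((one_le_inv₀ (hlam_pos k)).2 (hlam1 k))) (sq_nonneg _)
  have hx : 0 ≤ S / T := div_nonneg hS hY.le
  obtain ⟨hG_pos, hG_le_one⟩ := prod_rpow_mem_Ioc univ (fun k _ => hlam_pos k)
    (fun k _ => hlam1 k) (by positivity : (0 : ℝ) ≤ 1 / n)
  have hB : 0 < 1 + S / T := by linarith
  have hfirst : (1 + S / T) ^ (-(n : ℝ) / 2)
      ≤ ((∑ k, (lam k)⁻¹ * Y k ^ 2) / T * (∏ k, lam k) ^ ((1 : ℝ) / n)) ^ (-(n : ℝ) / 2) := by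
    rw [sum_mul_div_sum_eq_one_add univ (fun k => (lam k)⁻¹) (fun k => Y k ^ 2) hY.ne']
    exact rpow_le_rpow_of_nonpos (mul_pos hB hG_pos) (mul_le_of_le_one_right hB.le hG_le_one)
      (by linarith [n.cast_nonneg (α := ℝ)])
  refine ⟨hfirst, fun ⟨hSN, hTn⟩ => le_trans ?_ hfirst⟩
  have hSn : S / T * (n / 2) ≤ (n : ℝ) ^ ((1 : ℝ) / 2 - τ) :=
    calc S / T * (n / 2) ≤ S / T * T := mul_le_mul_of_nonneg_left hTn hx
      _ = S := div_mul_cancel₀ S hY.ne'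
      _ ≤ _ := hSN
  calc exp (-(n : ℝ) ^ ((1 : ℝ) / 2 - τ)) ≤ exp (-(S / T * (n / 2))) :=
        exp_le_exp.2 (neg_le_neg hSn)
    _ ≤ (1 + S / T) ^ (-((n : ℝ) / 2)) := exp_neg_mul_le_one_add_rpow_neg hx (by positivity)
    _ = _ := by rw [neg_div]

/-- Suppose `λ₁,…,λₙ ∈ (0,1]` satisfy `λₖ ≥ (α₀/α)^{2ν+d}` with `α ≥ α₀ > 0`, and
`Y₁,…,Yₙ` are reals with `∑Yₖ² > 0`. Then
`[(∑λₖ⁻¹Yₖ²/∑Yₖ²)·(∏λₖ)^{1/n}]^{−n/2} ≥ [1 + (∑(λₖ⁻¹−1)Yₖ²)/(∑Yₖ²)]^{−n/2}`;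
and if additionally `∑(λₖ⁻¹−1)Yₖ² ≤ n^{1/2−τ}` and `∑Yₖ² ≥ n/2` with `τ ∈ (0,1/2)`,
then this quantity is at least `exp(−n^{1/2−τ})`. -/
theorem stmt18 (n : ℕ) (hn : 0 < n) (ν : ℝ) (hν : 0 < ν) (d : ℕ) (hd : 1 ≤ d)
    (α₀ α τ : ℝ) (hα₀ : 0 < α₀) (hαα : α₀ ≤ α) (hτ : τ ∈ Set.Ioo (0 : ℝ) (1 / 2))
    (lam Y : Fin n → ℝ) (hlam1 : ∀ k, lam k ≤ 1)
    (hlamlo : ∀ k, (α₀ / α) ^ (2 * ν + (d : ℝ)) ≤ lam k)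
    (hY : 0 < ∑ k, Y k ^ 2) :
    (1 + (∑ k, ((lam k)⁻¹ - 1) * Y k ^ 2) / ∑ k, Y k ^ 2) ^ (-(n : ℝ) / 2)
        ≤ ((∑ k, (lam k)⁻¹ * Y k ^ 2) / (∑ k, Y k ^ 2)
            * (∏ k, lam k) ^ ((1 : ℝ) / n)) ^ (-(n : ℝ) / 2) ∧
    ((∑ k, ((lam k)⁻¹ - 1) * Y k ^ 2 ≤ (n : ℝ) ^ ((1 : ℝ) / 2 - τ)
        ∧ (n : ℝ) / 2 ≤ ∑ k, Y k ^ 2) →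
      Real.exp (-(n : ℝ) ^ ((1 : ℝ) / 2 - τ))
        ≤ ((∑ k, (lam k)⁻¹ * Y k ^ 2) / (∑ k, Y k ^ 2)
            * (∏ k, lam k) ^ ((1 : ℝ) / n)) ^ (-(n : ℝ) / 2)) :=
  stmt18_general n ν d α₀ α τ hα₀ hαα lam Y hlam1 hlamlo hY
end
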